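/- arXiv:1604.01855 — 6 statements merged into one kernel-verified Lean document; each statement's English description precedes it below -/
import Mathlib

section
/- Let f be a real-valued function that is continuous on the closed interval [a,b] and differentiable on the open interval (a,b), where a < b and the interval [a,b] does not contain 0. Then for all pairs x₁, x₂ in [a,b] with x₁ ≠ x₂, there exists a point ξ strictly between x₁ and x₂ such that (x₁·f(x₂) − x₂·f(x₁))/(x₁ − x₂) = f(ξ) − ξ·f'(ξ). -/
/-- Pompeiu's mean value theorem (one variable). -/
theorem pompeiu_mean_value_theorem (a b : ℝ) (hab : a < b)
    (h0 : (0 : ℝ) ∉ Set.Icc a b) (f : ℝ → ℝ)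
    (hcont : ContinuousOn f (Set.Icc a b))
    (hdiff : DifferentiableOn ℝ f (Set.Ioo a b)) :
    ∀ x₁ ∈ Set.Icc a b, ∀ x₂ ∈ Set.Icc a b, x₁ ≠ x₂ →
      ∃ ξ ∈ Set.Ioo (min x₁ x₂) (max x₁ x₂),
        (x₁ * f x₂ - x₂ * f x₁) / (x₁ - x₂) = f ξ - ξ * deriv f ξ := by
  intro x₁ hx₁ x₂ hx₂ hne
  have hne0 : ∀ x ∈ Set.Icc a b, x ≠ 0 := fun x hx h => h0 (h ▸ hx)
  set u := min x₁ x₂ with hu'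
  set v := max x₁ x₂ with hv'
  have huv : u < v := min_lt_max.mpr hne
  have hua : a ≤ u := le_min hx₁.1 hx₂.1
  have hvb : v ≤ b := max_le hx₁.2 hx₂.2
  have hsub : Set.Icc u v ⊆ Set.Icc a b := Set.Icc_subset_Icc hua hvb
  have hsubo : Set.Ioo u v ⊆ Set.Ioo a b := Set.Ioo_subset_Ioo hua hvb
  have hu0 : u ≠ 0 := hne0 u (hsub ⟨le_refl u, huv.le⟩)
  have hv0 : v ≠ 0 := hne0 v (hsub ⟨huv.le, le_refl v⟩)
  have hFc : ContinuousOn (fun x => f x / x) (Set.Icc u v) :=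
    ((hcont.mono hsub).div (continuousOn_id) (fun x hx => hne0 x (hsub hx)))
  have hGc : ContinuousOn (fun x : ℝ => x⁻¹) (Set.Icc u v) :=
    ContinuousOn.inv₀ continuousOn_id (fun x hx => hne0 x (hsub hx))
  have hF' : ∀ x ∈ Set.Ioo u v, HasDerivAt (fun x => f x / x)
      ((deriv f x * x - f x * 1) / x ^ 2) x := by
    intro x hx
    have hx0 : x ≠ 0 := hne0 x (Set.Ioo_subset_Icc_self (hsubo hx))
    have hfd : HasDerivAt f (deriv f x) x :=
      ((hdiff x (hsubo hx)).differentiableAt (isOpen_Ioo.mem_nhds (hsubo hx))).hasDerivAt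
    exact hfd.div (hasDerivAt_id x) hx0
  have hG' : ∀ x ∈ Set.Ioo u v, HasDerivAt (fun x : ℝ => x⁻¹) (-(x ^ 2)⁻¹) x := by
    intro x hx
    exact hasDerivAt_inv (hne0 x (Set.Ioo_subset_Icc_self (hsubo hx)))
  obtain ⟨c, hc, heq⟩ := exists_ratio_hasDerivAt_eq_ratio_slope (fun x => f x / x)
    (fun x => (deriv f x * x - f x * 1) / x ^ 2) huv hFc hF'
    (fun x : ℝ => x⁻¹) (fun x => -(x ^ 2)⁻¹) hGc hG'
  refine ⟨c, hc, ?_⟩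
  have hc0 : c ≠ 0 := hne0 c (Set.Ioo_subset_Icc_self (hsubo hc))
  have key : (u * f v - v * f u) / (u - v) = f c - c * deriv f c := by
    rw [div_eq_iff (sub_ne_zero.mpr huv.ne)]
    field_simp at heq
    nlinarith [sq_nonneg c, heq]
  rcases le_total x₁ x₂ with h | h
  · have hu2 : u = x₁ := min_eq_left h
    have hv2 : v = x₂ := max_eq_right h
    rw [hu2, hv2] at key
    exact key
  · have hu2 : u = x₂ := min_eq_right h
    have hv2 : v = x₁ := max_eq_left h
    rw [hu2, hv2] at key
    rw [← key, div_eq_div_iff (sub_ne_zero.mpr hne) (sub_ne_zero.mpr (Ne.symm hne))]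
    ring
end

section
/- Let a, b, c, d be real numbers with a < b and c < d, and let f : [a,b] × [c,d] → ℝ satisfy: (1) for each fixed y₀ ∈ [c,d], the function x ↦ f(x,y₀) is continuous on [a,b] and differentiable on (a,b); (2) for each fixed x₀ ∈ (a,b), the function y ↦ f_x(x₀,y) (the partial derivative of f with respect to the first variable) is continuous on [c,d] and differentiable on (c,d); (3) f(a,c) + f(b,d) = f(a,d) + f(b,c). Then there exists (x₀,y₀) ∈ (a,b) × (c,d) such that the mixed partial derivative f_{xy}(x₀,y₀) = 0. -/
open Set

theorem exists_deriv_eq_deriv_of_sub_eq_sub {f g : ℝ → ℝ} {a b : ℝ} (hab : a < b)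
    (hfc : ContinuousOn f (Icc a b)) (hgc : ContinuousOn g (Icc a b))
    (hfd : DifferentiableOn ℝ f (Ioo a b)) (hgd : DifferentiableOn ℝ g (Ioo a b))
    (hfg : f b - f a = g b - g a) :
    ∃ x ∈ Ioo a b, deriv f x = deriv g x := by
  have hends : (f - g) a = (f - g) b := by simp only [Pi.sub_apply]; linarith
  obtain ⟨x, hx, hderiv⟩ := exists_deriv_eq_zero hab (hfc.sub hgc) hends
  have hnhds : Ioo a b ∈ nhds x := Ioo_mem_nhds hx.1 hx.2
  rw [deriv_sub ((hfd x hx).differentiableAt hnhds) ((hgd x hx).differentiableAt hnhds),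
    sub_eq_zero] at hderiv
  exact ⟨x, hx, hderiv⟩

/-- Rectangular Rolle's Theorem for functions of two variables. -/
theorem rectangular_rolle (a b c d : ℝ) (hab : a < b) (hcd : c < d)
    (f : ℝ → ℝ → ℝ)
    (h1 : ∀ y₀ ∈ Set.Icc c d,
      ContinuousOn (fun x => f x y₀) (Set.Icc a b) ∧
      DifferentiableOn ℝ (fun x => f x y₀) (Set.Ioo a b))
    (h2 : ∀ x₀ ∈ Set.Ioo a b,
      ContinuousOn (fun y => deriv (fun x => f x y) x₀) (Set.Icc c d) ∧
      DifferentiableOn ℝ (fun y => deriv (fun x => f x y) x₀) (Set.Ioo c d))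
    (h3 : f a c + f b d = f a d + f b c) :
    ∃ x₀ ∈ Set.Ioo a b, ∃ y₀ ∈ Set.Ioo c d,
      deriv (fun y => deriv (fun x => f x y) x₀) y₀ = 0 := by
  obtain ⟨hcont_c, hdiff_c⟩ := h1 c (left_mem_Icc.2 hcd.le)
  obtain ⟨hcont_d, hdiff_d⟩ := h1 d (right_mem_Icc.2 hcd.le)
  obtain ⟨x₀, hx₀, hfx_eq⟩ := exists_deriv_eq_deriv_of_sub_eq_sub hab hcont_c hcont_d
    hdiff_c hdiff_d (by linarith)
  obtain ⟨y₀, hy₀, hfxy⟩ := exists_deriv_eq_zero hcd (h2 x₀ hx₀).1 hfx_eq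
  exact ⟨x₀, hx₀, y₀, hy₀, hfxy⟩
end

section
/- Let a, b, c, d be real numbers with a < b and c < d, and let f : [a,b] × [c,d] → ℝ satisfy: (1) for each fixed y₀ ∈ [c,d], the function x ↦ f(x,y₀) is continuous on [a,b] and differentiable on (a,b); (2) for each fixed x₀ ∈ (a,b), the function y ↦ f_x(x₀,y) is continuous on [c,d] and differentiable on (c,d). Then there exists (x₀,y₀) ∈ (a,b) × (c,d) such that f(b,d) − f(b,c) − f(a,d) + f(a,c) = (b − a)·(d − c)·f_{xy}(x₀,y₀). -/
/-- Rectangular Mean Value Theorem for functions of two variables. -/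
theorem rectangular_mean_value_theorem (a b c d : ℝ) (hab : a < b) (hcd : c < d)
    (f : ℝ → ℝ → ℝ)
    (h1 : ∀ y₀ ∈ Set.Icc c d,
      ContinuousOn (fun x => f x y₀) (Set.Icc a b) ∧
      DifferentiableOn ℝ (fun x => f x y₀) (Set.Ioo a b))
    (h2 : ∀ x₀ ∈ Set.Ioo a b,
      ContinuousOn (fun y => deriv (fun x => f x y) x₀) (Set.Icc c d) ∧
      DifferentiableOn ℝ (fun y => deriv (fun x => f x y) x₀) (Set.Ioo c d)) :
    ∃ x₀ ∈ Set.Ioo a b, ∃ y₀ ∈ Set.Ioo c d,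
      f b d - f b c - f a d + f a c =
        (b - a) * (d - c) * deriv (fun y => deriv (fun x => f x y) x₀) y₀ := by
  have hd := h1 d (Set.right_mem_Icc.2 hcd.le)
  have hc := h1 c (Set.left_mem_Icc.2 hcd.le)
  set g : ℝ → ℝ := fun x => f x d - f x c with hg
  have hgc : ContinuousOn g (Set.Icc a b) := hd.1.sub hc.1
  have hgd : DifferentiableOn ℝ g (Set.Ioo a b) := hd.2.sub hc.2
  obtain ⟨x₀, hx₀, hderiv⟩ := exists_deriv_eq_slope g hab hgc hgd
  have hdx : DifferentiableAt ℝ (fun x => f x d) x₀ :=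
    (hd.2 x₀ hx₀).differentiableAt (isOpen_Ioo.mem_nhds hx₀)
  have hcx : DifferentiableAt ℝ (fun x => f x c) x₀ :=
    (hc.2 x₀ hx₀).differentiableAt (isOpen_Ioo.mem_nhds hx₀)
  have hgder : deriv g x₀ = deriv (fun x => f x d) x₀ - deriv (fun x => f x c) x₀ :=
    deriv_sub hdx hcx
  obtain ⟨hx2c, hx2d⟩ := h2 x₀ hx₀
  obtain ⟨y₀, hy₀, hderiv2⟩ :=
    exists_deriv_eq_slope (fun y => deriv (fun x => f x y) x₀) hcd hx2c hx2d
  refine ⟨x₀, hx₀, y₀, hy₀, ?_⟩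
  rw [hgder] at hderiv
  have hba : b - a ≠ 0 := sub_ne_zero.2 hab.ne'
  have hdc : d - c ≠ 0 := sub_ne_zero.2 hcd.ne'
  field_simp at hderiv hderiv2
  simp only [hg] at hderiv
  nlinarith [hderiv, hderiv2]
end

section
/- Let a, b, c, d be real numbers with a < b and c < d, and let f, g : [a,b] × [c,d] → ℝ satisfy: (1) for each fixed y₀ ∈ [c,d], the functions x ↦ f(x,y₀) and x ↦ g(x,y₀) are continuous on [a,b] and differentiable on (a,b); (2) for each fixed x₀ ∈ (a,b), the functions y ↦ f_x(x₀,y) and y ↦ g_x(x₀,y) are continuous on [c,d] and differentiable on (c,d). Then there exists (x₀,y₀) ∈ (a,b) × (c,d) such that f_{xy}(x₀,y₀) · (g(b,d) − g(b,c) − g(a,d) + g(a,c)) = g_{xy}(x₀,y₀) · (f(b,d) − f(b,c) − f(a,d) + f(a,c)). -/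
/-- Rectangular Cauchy Mean Value Theorem for functions of two variables
(stated in cross-multiplied form). -/
theorem rectangular_cauchy_mean_value_theorem (a b c d : ℝ) (hab : a < b) (hcd : c < d)
    (f g : ℝ → ℝ → ℝ)
    (h1f : ∀ y₀ ∈ Set.Icc c d,
      ContinuousOn (fun x => f x y₀) (Set.Icc a b) ∧
      DifferentiableOn ℝ (fun x => f x y₀) (Set.Ioo a b))
    (h1g : ∀ y₀ ∈ Set.Icc c d,
      ContinuousOn (fun x => g x y₀) (Set.Icc a b) ∧
      DifferentiableOn ℝ (fun x => g x y₀) (Set.Ioo a b))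
    (h2f : ∀ x₀ ∈ Set.Ioo a b,
      ContinuousOn (fun y => deriv (fun x => f x y) x₀) (Set.Icc c d) ∧
      DifferentiableOn ℝ (fun y => deriv (fun x => f x y) x₀) (Set.Ioo c d))
    (h2g : ∀ x₀ ∈ Set.Ioo a b,
      ContinuousOn (fun y => deriv (fun x => g x y) x₀) (Set.Icc c d) ∧
      DifferentiableOn ℝ (fun y => deriv (fun x => g x y) x₀) (Set.Ioo c d)) :
    ∃ x₀ ∈ Set.Ioo a b, ∃ y₀ ∈ Set.Ioo c d,
      deriv (fun y => deriv (fun x => f x y) x₀) y₀ *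
          (g b d - g b c - g a d + g a c) =
        deriv (fun y => deriv (fun x => g x y) x₀) y₀ *
          (f b d - f b c - f a d + f a c) := by
  set Δf : ℝ := f b d - f b c - f a d + f a c with hΔf
  set Δg : ℝ := g b d - g b c - g a d + g a c with hΔg
  have hc : c ∈ Set.Icc c d := ⟨le_refl c, le_of_lt hcd⟩
  have hd : d ∈ Set.Icc c d := ⟨le_of_lt hcd, le_refl d⟩
  -- auxiliary function φ
  set φ : ℝ → ℝ := fun x => (f x d - f x c) * Δg - (g x d - g x c) * Δf with hφ
  have hφc : ContinuousOn φ (Set.Icc a b) := by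
    exact ((((h1f d hd).1.sub (h1f c hc).1).mul continuousOn_const).sub
      (((h1g d hd).1.sub (h1g c hc).1).mul continuousOn_const))
  have hφab : φ a = φ b := by simp only [hφ, hΔf, hΔg]; ring
  obtain ⟨x₀, hx₀, hx₀0⟩ := exists_deriv_eq_zero hab hφc hφab
  -- compute deriv φ x₀
  have hIoo : Set.Ioo a b ∈ nhds x₀ := (isOpen_Ioo).mem_nhds hx₀
  have dfd : DifferentiableAt ℝ (fun x => f x d) x₀ :=
    ((h1f d hd).2 x₀ hx₀).differentiableAt hIoo
  have dfc : DifferentiableAt ℝ (fun x => f x c) x₀ :=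
    ((h1f c hc).2 x₀ hx₀).differentiableAt hIoo
  have dgd : DifferentiableAt ℝ (fun x => g x d) x₀ :=
    ((h1g d hd).2 x₀ hx₀).differentiableAt hIoo
  have dgc : DifferentiableAt ℝ (fun x => g x c) x₀ :=
    ((h1g c hc).2 x₀ hx₀).differentiableAt hIoo
  have hderφ : HasDerivAt φ
      ((deriv (fun x => f x d) x₀ - deriv (fun x => f x c) x₀) * Δg -
        (deriv (fun x => g x d) x₀ - deriv (fun x => g x c) x₀) * Δf) x₀ :=
    (((dfd.hasDerivAt.sub dfc.hasDerivAt).mul_const Δg).sub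
      ((dgd.hasDerivAt.sub dgc.hasDerivAt).mul_const Δf))
  have key : (deriv (fun x => f x d) x₀ - deriv (fun x => f x c) x₀) * Δg -
      (deriv (fun x => g x d) x₀ - deriv (fun x => g x c) x₀) * Δf = 0 := by
    rw [← hderφ.deriv]; exact hx₀0
  -- auxiliary function ψ
  set ψ : ℝ → ℝ := fun y =>
    deriv (fun x => f x y) x₀ * Δg - deriv (fun x => g x y) x₀ * Δf with hψ
  have hψc : ContinuousOn ψ (Set.Icc c d) :=
    (((h2f x₀ hx₀).1.mul continuousOn_const).sub
      ((h2g x₀ hx₀).1.mul continuousOn_const))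
  have hψcd : ψ c = ψ d := by simp only [hψ]; linarith
  obtain ⟨y₀, hy₀, hy₀0⟩ := exists_deriv_eq_zero hcd hψc hψcd
  refine ⟨x₀, hx₀, y₀, hy₀, ?_⟩
  have hJoo : Set.Ioo c d ∈ nhds y₀ := (isOpen_Ioo).mem_nhds hy₀
  have df2 : DifferentiableAt ℝ (fun y => deriv (fun x => f x y) x₀) y₀ :=
    ((h2f x₀ hx₀).2 y₀ hy₀).differentiableAt hJoo
  have dg2 : DifferentiableAt ℝ (fun y => deriv (fun x => g x y) x₀) y₀ :=
    ((h2g x₀ hx₀).2 y₀ hy₀).differentiableAt hJoo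
  have hderψ : HasDerivAt ψ
      (deriv (fun y => deriv (fun x => f x y) x₀) y₀ * Δg -
        deriv (fun y => deriv (fun x => g x y) x₀) y₀ * Δf) y₀ :=
    ((df2.hasDerivAt.mul_const Δg).sub (dg2.hasDerivAt.mul_const Δf))
  have key2 : deriv (fun y => deriv (fun x => f x y) x₀) y₀ * Δg -
      deriv (fun y => deriv (fun x => g x y) x₀) y₀ * Δf = 0 := by
    rw [← hderψ.deriv]; exact hy₀0
  linarith
end

section
/- Let a, b, c, d be real numbers with a < b and c < d such that 0 ∉ [a,b] and 0 ∉ [c,d]. Let f : [a,b] × [c,d] → ℝ satisfy: (1) for each fixed y₀ ∈ [c,d], the function x ↦ f(x,y₀) is continuous on [a,b] and differentiable on (a,b); (2) for each fixed x₀ ∈ (a,b), the function y ↦ f_x(x₀,y) is continuous on [c,d] and differentiable on (c,d); assume moreover that f is twice differentiable in the sense that the mixed partials needed below exist and satisfy f_{xy} = f_{yx} on (a,b) × (c,d). Then for all x₁, x₂ ∈ (a,b) with x₁ < x₂ and all y₁, y₂ ∈ (c,d) with y₁ < y₂, there exists (ξ₁, ξ₂) ∈ [x₁,x₂] × [y₁,y₂]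 such that ξ₁·ξ₂·f_{xy}(ξ₁,ξ₂) − ξ₁·f_x(ξ₁,ξ₂) − ξ₂·f_y(ξ₁,ξ₂) + f(ξ₁,ξ₂) = (x₂·y₂·f(x₁,y₁) − x₂·y₁·f(x₁,y₂) − x₁·y₂·f(x₂,y₁) + x₁·y₁·f(x₂,y₂)) / ((x₂ − x₁)·(y₂ − y₁)). -/
/-!
Under the substitution `(t, s) = (1/x, 1/y)` the function `g t s = t * s * f (1/t) (1/s)` has
mixed partial derivative `f - x f_x - y f_y + x y f_xy`, evaluated at `(1/t, 1/s)`, while the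
double difference of `g` over the image rectangle is, up to the factor `x₁ x₂ y₁ y₂`, the
numerator of the right-hand side. Lagrange's mean value theorem applied to `g` once in each
variable then gives the result.
-/

open Set

section InvOrder

variable {α : Type*} [Field α] [LinearOrder α] [IsStrictOrderedRing α] {p q u : α}

theorem inv_lt_inv_of_mul_pos (hpq : 0 < p * q) (h : p < q) : q⁻¹ < p⁻¹ := by
  rw [← sub_pos, inv_sub_inv (left_ne_zero_of_mul hpq.ne') (right_ne_zero_of_mul hpq.ne')]
  exact div_pos (sub_pos.2 h) hpq

theorem inv_mem_Icc_inv_of_mul_pos (hpq : 0 < p * q) (hu : u ∈ Icc p q) :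
    u⁻¹ ∈ Icc q⁻¹ p⁻¹ := by
  rcases mul_pos_iff.1 hpq with ⟨hp, -⟩ | ⟨-, hq⟩
  · exact ⟨inv_anti₀ (hp.trans_le hu.1) hu.2, inv_anti₀ hp hu.1⟩
  · have hu0 := hu.2.trans_lt hq
    exact ⟨(inv_le_inv_of_neg hq hu0).2 hu.2, (inv_le_inv_of_neg hu0 (hu.1.trans_lt hu0)).2 hu.1⟩

theorem mul_pos_of_mem_Icc_of_zero_notMem {x y : α} (h0 : (0 : α) ∉ Icc p q)
    (hx : x ∈ Icc p q) (hy : y ∈ Icc p q) : 0 < x * y := by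
  rcases lt_or_ge 0 p with hp | hp
  · exact mul_pos (hp.trans_le hx.1) (hp.trans_le hy.1)
  · have hq : q < 0 := lt_of_not_ge fun hq => h0 ⟨hp, hq⟩
    exact mul_pos_of_neg_of_neg (hx.2.trans_lt hq) (hy.2.trans_lt hq)

end InvOrder

theorem HasDerivAt.mul_comp_inv {𝕜 F : Type*} [NontriviallyNormedField 𝕜]
    [NormedAddCommGroup F] [NormedSpace 𝕜 F] {φ : 𝕜 → F} {φ' : F} {x : 𝕜}
    (hφ : HasDerivAt φ φ' x⁻¹) (hx : x ≠ 0) :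
    HasDerivAt (fun t => t • φ t⁻¹) (φ x⁻¹ - x⁻¹ • φ') x := by
  refine ((hasDerivAt_id' x).fun_smul (hφ.scomp x (hasDerivAt_inv hx))).congr_deriv ?_
  have hcoef : x * -(x ^ 2)⁻¹ = -x⁻¹ := by field_simp
  rw [smul_smul, hcoef, one_smul, neg_smul, Function.comp_apply, sub_eq_neg_add]

theorem exists_double_sub_eq_mixed_deriv_mul {g g₁ g₂ : ℝ → ℝ → ℝ} {t₁ t₂ s₁ s₂ : ℝ}
    (ht : t₁ < t₂) (hs : s₁ < s₂)
    (hg : ∀ t ∈ Icc t₁ t₂, ∀ s ∈ Icc s₁ s₂, HasDerivAt (g · s) (g₁ t s) t)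
    (hg₁ : ∀ t ∈ Icc t₁ t₂, ∀ s ∈ Icc s₁ s₂, HasDerivAt (g₁ t) (g₂ t s) s) :
    ∃ u ∈ Ioo t₁ t₂, ∃ v ∈ Ioo s₁ s₂,
      g t₂ s₂ - g t₂ s₁ - g t₁ s₂ + g t₁ s₁ = g₂ u v * (t₂ - t₁) * (s₂ - s₁) := by
  have hs₁ : s₁ ∈ Icc s₁ s₂ := left_mem_Icc.2 hs.le
  have hs₂ : s₂ ∈ Icc s₁ s₂ := right_mem_Icc.2 hs.le
  have hdiff : ∀ t ∈ Icc t₁ t₂, HasDerivAt (fun t => g t s₂ - g t s₁) (g₁ t s₂ - g₁ t s₁) t :=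
    fun t ht => (hg t ht s₂ hs₂).sub (hg t ht s₁ hs₁)
  obtain ⟨u, hu, hu_eq⟩ := exists_hasDerivAt_eq_slope _ _ ht
    (fun t ht => (hdiff t ht).continuousAt.continuousWithinAt)
    (fun t ht => hdiff t (Ioo_subset_Icc_self ht))
  have hu' := Ioo_subset_Icc_self hu
  obtain ⟨v, hv, hv_eq⟩ := exists_hasDerivAt_eq_slope (g₁ u) (g₂ u) hs
    (fun s hs => (hg₁ u hu' s hs).continuousAt.continuousWithinAt)
    (fun s hs => hg₁ u hu' s (Ioo_subset_Icc_self hs))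
  refine ⟨u, hu, v, hv, ?_⟩
  rw [hv_eq, hu_eq]
  field_simp [(sub_pos.2 hs).ne', (sub_pos.2 ht).ne']
  ring

theorem exists_pompeiu_mean_value_Icc {f fx fy fxy : ℝ → ℝ → ℝ} {x₁ x₂ y₁ y₂ : ℝ}
    (hx : x₁ < x₂) (hy : y₁ < y₂) (hx₀ : (0 : ℝ) ∉ Icc x₁ x₂) (hy₀ : (0 : ℝ) ∉ Icc y₁ y₂)
    (hfx : ∀ x ∈ Icc x₁ x₂, ∀ y ∈ Icc y₁ y₂, HasDerivAt (f · y) (fx x y) x)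
    (hfy : ∀ x ∈ Icc x₁ x₂, ∀ y ∈ Icc y₁ y₂, HasDerivAt (f x) (fy x y) y)
    (hfxy : ∀ x ∈ Icc x₁ x₂, ∀ y ∈ Icc y₁ y₂, HasDerivAt (fx x) (fxy x y) y) :
    ∃ ξ₁ ∈ Icc x₁ x₂, ∃ ξ₂ ∈ Icc y₁ y₂,
      ξ₁ * ξ₂ * fxy ξ₁ ξ₂ - ξ₁ * fx ξ₁ ξ₂ - ξ₂ * fy ξ₁ ξ₂ + f ξ₁ ξ₂ =
        (x₂ * y₂ * f x₁ y₁ - x₂ * y₁ * f x₁ y₂ - x₁ * y₂ * f x₂ y₁ +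
          x₁ * y₁ * f x₂ y₂) / ((x₂ - x₁) * (y₂ - y₁)) := by
  have hxx := mul_pos_of_mem_Icc_of_zero_notMem hx₀ (left_mem_Icc.2 hx.le) (right_mem_Icc.2 hx.le)
  have hyy := mul_pos_of_mem_Icc_of_zero_notMem hy₀ (left_mem_Icc.2 hy.le) (right_mem_Icc.2 hy.le)
  have hxx' : 0 < x₂⁻¹ * x₁⁻¹ := by rw [← mul_inv_rev]; exact inv_pos.2 hxx
  have hyy' : 0 < y₂⁻¹ * y₁⁻¹ := by rw [← mul_inv_rev]; exact inv_pos.2 hyy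
  have hmemx : ∀ t ∈ Icc x₂⁻¹ x₁⁻¹, t⁻¹ ∈ Icc x₁ x₂ := fun t ht => by
    simpa only [inv_inv] using inv_mem_Icc_inv_of_mul_pos hxx' ht
  have hmemy : ∀ s ∈ Icc y₂⁻¹ y₁⁻¹, s⁻¹ ∈ Icc y₁ y₂ := fun s hs => by
    simpa only [inv_inv] using inv_mem_Icc_inv_of_mul_pos hyy' hs
  have hne_x : ∀ t ∈ Icc x₂⁻¹ x₁⁻¹, t ≠ 0 := fun t ht h => hx₀ (by simpa [h] using hmemx t ht)
  have hne_y : ∀ s ∈ Icc y₂⁻¹ y₁⁻¹, s ≠ 0 := fun s hs h => hy₀ (by simpa [h] using hmemy s hs)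
  -- `g t s = t * s * f t⁻¹ s⁻¹`, written so that `HasDerivAt.mul_comp_inv` applies in each variable
  obtain ⟨u, hu, v, hv, huv⟩ := exists_double_sub_eq_mixed_deriv_mul
    (g := fun t s => s * (t * f t⁻¹ s⁻¹))
    (g₁ := fun t s => s * (f t⁻¹ s⁻¹ - t⁻¹ * fx t⁻¹ s⁻¹))
    (g₂ := fun t s => f t⁻¹ s⁻¹ - t⁻¹ * fx t⁻¹ s⁻¹ - s⁻¹ * (fy t⁻¹ s⁻¹ - t⁻¹ * fxy t⁻¹ s⁻¹))
    (inv_lt_inv_of_mul_pos hxx hx) (inv_lt_inv_of_mul_pos hyy hy)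
    (fun t ht s hs => ((hfx _ (hmemx t ht) _ (hmemy s hs)).mul_comp_inv (hne_x t ht)).const_mul s)
    (fun t ht s hs => ((hfy _ (hmemx t ht) _ (hmemy s hs)).sub
      ((hfxy _ (hmemx t ht) _ (hmemy s hs)).const_mul t⁻¹)).mul_comp_inv (hne_y s hs))
  refine ⟨u⁻¹, hmemx u (Ioo_subset_Icc_self hu), v⁻¹, hmemy v (Ioo_subset_Icc_self hv), ?_⟩
  have hx₁ : x₁ ≠ 0 := left_ne_zero_of_mul hxx.ne'
  have hx₂ : x₂ ≠ 0 := right_ne_zero_of_mul hxx.ne'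
  have hy₁ : y₁ ≠ 0 := left_ne_zero_of_mul hyy.ne'
  have hy₂ : y₂ ≠ 0 := right_ne_zero_of_mul hyy.ne'
  simp only [inv_inv] at huv
  rw [eq_div_iff (mul_ne_zero (sub_pos.2 hx).ne' (sub_pos.2 hy).ne')]
  linear_combination (norm := skip) (x₁ * x₂ * y₁ * y₂) * huv.symm
  field_simp
  ring

theorem pompeiu_mean_value_theorem_two_dim_general (a b c d : ℝ)
    (h0ab : (0 : ℝ) ∉ Set.Icc a b) (h0cd : (0 : ℝ) ∉ Set.Icc c d)
    (f fx fy fxy : ℝ → ℝ → ℝ)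
    (hfx : ∀ x ∈ Set.Ioo a b, ∀ y ∈ Set.Icc c d,
      HasDerivAt (fun t => f t y) (fx x y) x)
    (hfxy : ∀ x ∈ Set.Ioo a b, ∀ y ∈ Set.Ioo c d,
      HasDerivAt (fun s => fx x s) (fxy x y) y)
    (hfy : ∀ x ∈ Set.Ioo a b, ∀ y ∈ Set.Ioo c d,
      HasDerivAt (fun s => f x s) (fy x y) y) :
    ∀ x₁ ∈ Set.Ioo a b, ∀ x₂ ∈ Set.Ioo a b, x₁ < x₂ →
      ∀ y₁ ∈ Set.Ioo c d, ∀ y₂ ∈ Set.Ioo c d, y₁ < y₂ →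
        ∃ ξ₁ ∈ Set.Icc x₁ x₂, ∃ ξ₂ ∈ Set.Icc y₁ y₂,
          ξ₁ * ξ₂ * fxy ξ₁ ξ₂ - ξ₁ * fx ξ₁ ξ₂ - ξ₂ * fy ξ₁ ξ₂ + f ξ₁ ξ₂ =
            (x₂ * y₂ * f x₁ y₁ - x₂ * y₁ * f x₁ y₂ - x₁ * y₂ * f x₂ y₁ +
              x₁ * y₁ * f x₂ y₂) / ((x₂ - x₁) * (y₂ - y₁)) := by
  intro x₁ hx₁ x₂ hx₂ hx y₁ hy₁ y₂ hy₂ hy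
  have hX : Icc x₁ x₂ ⊆ Ioo a b := Icc_subset_Ioo hx₁.1 hx₂.2
  have hY : Icc y₁ y₂ ⊆ Ioo c d := Icc_subset_Ioo hy₁.1 hy₂.2
  exact exists_pompeiu_mean_value_Icc hx hy
    (fun h => h0ab (Ioo_subset_Icc_self (hX h))) (fun h => h0cd (Ioo_subset_Icc_self (hY h)))
    (fun x hx y hy => hfx x (hX hx) y (Ioo_subset_Icc_self (hY hy)))
    (fun x hx y hy => hfy x (hX hx) y (hY hy))
    (fun x hx y hy => hfxy x (hX hx) y (hY hy))

/-- Pompeiu's Mean Value Theorem for functions of two variables.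
Here `fx`, `fy` are the first-order partial derivatives of `f` and `fxy` is the
mixed second-order partial derivative `∂²f/∂y∂x`; the hypothesis `hsymm` expresses
that the mixed partial `∂²f/∂x∂y` also exists and equals `fxy`. -/
theorem pompeiu_mean_value_theorem_two_dim (a b c d : ℝ) (hab : a < b) (hcd : c < d)
    (h0ab : (0 : ℝ) ∉ Set.Icc a b) (h0cd : (0 : ℝ) ∉ Set.Icc c d)
    (f fx fy fxy : ℝ → ℝ → ℝ)
    (hcont : ∀ y₀ ∈ Set.Icc c d, ContinuousOn (fun x => f x y₀) (Set.Icc a b))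
    (hfx : ∀ x ∈ Set.Ioo a b, ∀ y ∈ Set.Icc c d,
      HasDerivAt (fun t => f t y) (fx x y) x)
    (hfxcont : ∀ x₀ ∈ Set.Ioo a b, ContinuousOn (fun y => fx x₀ y) (Set.Icc c d))
    (hfxy : ∀ x ∈ Set.Ioo a b, ∀ y ∈ Set.Ioo c d,
      HasDerivAt (fun s => fx x s) (fxy x y) y)
    (hfy : ∀ x ∈ Set.Ioo a b, ∀ y ∈ Set.Ioo c d,
      HasDerivAt (fun s => f x s) (fy x y) y)
    (hsymm : ∀ x ∈ Set.Ioo a b, ∀ y ∈ Set.Ioo c d,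
      HasDerivAt (fun t => fy t y) (fxy x y) x) :
    ∀ x₁ ∈ Set.Ioo a b, ∀ x₂ ∈ Set.Ioo a b, x₁ < x₂ →
      ∀ y₁ ∈ Set.Ioo c d, ∀ y₂ ∈ Set.Ioo c d, y₁ < y₂ →
        ∃ ξ₁ ∈ Set.Icc x₁ x₂, ∃ ξ₂ ∈ Set.Icc y₁ y₂,
          ξ₁ * ξ₂ * fxy ξ₁ ξ₂ - ξ₁ * fx ξ₁ ξ₂ - ξ₂ * fy ξ₁ ξ₂ + f ξ₁ ξ₂ =
            (x₂ * y₂ * f x₁ y₁ - x₂ * y₁ * f x₁ y₂ - x₁ * y₂ * f x₂ y₁ +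
              x₁ * y₁ * f x₂ y₂) / ((x₂ - x₁) * (y₂ - y₁)) :=
  pompeiu_mean_value_theorem_two_dim_general a b c d h0ab h0cd f fx fy fxy hfx hfxy hfy
end

section
/- Let a, b, c, d be real numbers with a < b and c < d such that 0 ∉ [a,b] and 0 ∉ [c,d]. Let f, g : [a,b] × [c,d] → ℝ satisfy: (1) for each fixed y₀ ∈ [c,d], the functions x ↦ f(x,y₀) and x ↦ g(x,y₀) are continuous on [a,b] and differentiable on (a,b); (2) for each fixed x₀ ∈ (a,b), the functions y ↦ f_x(x₀,y) and y ↦ g_x(x₀,y) are continuous on [c,d] and differentiable on (c,d); assume the mixed partials of f and g exist and are symmetric (f_{xy} = f_{yx}, g_{xy} = g_{yx}) on (a,b) × (c,d). Let x₁, x₂ ∈ (a,b) with x₁ < x₂ and y₁, y₂ ∈ (c,d) with y₁ < y₂, and assume the rectangular increments Δf = f(x₂,y₂) − f(x₂,y₁) − f(x₁,y₂) + f(x₁,y₁) and Δg = g(x₂,y₂) − g(x₂,y₁) − g(x₁,y₂) + g(x₁,y₁) are both nonzero. Then there exists (ξ₁, ξ₂) ∈ [x₁,x₂] × [y₁,y₂]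 such that (ξ₁·ξ₂·g_{xy}(ξ₁,ξ₂) − ξ₁·g_x(ξ₁,ξ₂) − ξ₂·g_y(ξ₁,ξ₂) + g(ξ₁,ξ₂))/Δg − (ξ₁·ξ₂·f_{xy}(ξ₁,ξ₂) − ξ₁·f_x(ξ₁,ξ₂) − ξ₂·f_y(ξ₁,ξ₂) + f(ξ₁,ξ₂))/Δf = (x₂·y₂·g(x₁,y₁) − x₁·y₂·g(x₂,y₁) − x₂·y₁·g(x₁,y₂) + x₁·y₁·g(x₂,y₂)) / ((x₂ − x₁)·(y₂ − y₁)·Δg) − (x₂·y₂·f(x₁,y₁) − x₂·y₁·f(x₁,y₂) − x₁·y₂·f(x₂,y₁) + x₁·y₁·f(x₂,y₂)) / ((x₂ − x₁)·(y₂ − y₁)·Δf). -/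
/-! Pompeiu's trick: for `H u v = u * v * φ (1/u) (1/v)` the mixed partial `∂²H/∂u∂v` at
`(1/ξ₁, 1/ξ₂)` equals `ξ₁ξ₂ φ_xy − ξ₁ φ_x − ξ₂ φ_y + φ` at `(ξ₁, ξ₂)`, while the rectangular
increment of `H` over `[1/x₂, 1/x₁] × [1/y₂, 1/y₁]` divided by the area of that rectangle is
`(x₂y₂ φ(x₁,y₁) − x₂y₁ φ(x₁,y₂) − x₁y₂ φ(x₂,y₁) + x₁y₁ φ(x₂,y₂)) / ((x₂ − x₁)(y₂ − y₁))`.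
So the rectangular Lagrange mean value theorem for `H` is Pompeiu's mean value theorem for `φ`,
and applying the latter to `φ = g / Δg − f / Δf` gives Boggio's Cauchy-type version. -/

open Set

theorem exists_mixed_deriv_eq_rect_slope (h hu huv : ℝ → ℝ → ℝ) {u₁ u₂ v₁ v₂ : ℝ}
    (hu₁₂ : u₁ < u₂) (hv₁₂ : v₁ < v₂)
    (hdu : ∀ u ∈ Icc u₁ u₂, ∀ v ∈ Icc v₁ v₂, HasDerivAt (fun t => h t v) (hu u v) u)
    (hduv : ∀ u ∈ Icc u₁ u₂, ∀ v ∈ Icc v₁ v₂, HasDerivAt (fun s => hu u s) (huv u v) v) :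
    ∃ u ∈ Icc u₁ u₂, ∃ v ∈ Icc v₁ v₂,
      huv u v = (h u₂ v₂ - h u₂ v₁ - h u₁ v₂ + h u₁ v₁) / ((u₂ - u₁) * (v₂ - v₁)) := by
  have hv₁ : v₁ ∈ Icc v₁ v₂ := left_mem_Icc.2 hv₁₂.le
  have hv₂ : v₂ ∈ Icc v₁ v₂ := right_mem_Icc.2 hv₁₂.le
  have hdiff : ∀ u ∈ Icc u₁ u₂, HasDerivAt (fun t => h t v₂ - h t v₁) (hu u v₂ - hu u v₁) u :=
    fun u hu' => (hdu u hu' v₂ hv₂).sub (hdu u hu' v₁ hv₁)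
  obtain ⟨u, hu', hu_slope⟩ := exists_hasDerivAt_eq_slope _ _ hu₁₂
    (fun t ht => (hdiff t ht).continuousAt.continuousWithinAt)
    (fun t ht => hdiff t (Ioo_subset_Icc_self ht))
  have hu'' : u ∈ Icc u₁ u₂ := Ioo_subset_Icc_self hu'
  obtain ⟨v, hv', hv_slope⟩ := exists_hasDerivAt_eq_slope (fun s => hu u s) (huv u) hv₁₂
    (fun s hs => (hduv u hu'' s hs).continuousAt.continuousWithinAt)
    (fun s hs => hduv u hu'' s (Ioo_subset_Icc_self hs))
  refine ⟨u, hu'', v, Ioo_subset_Icc_self hv', ?_⟩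
  rw [hv_slope, hu_slope, div_div]
  ring

theorem HasDerivAt.mul_comp_inv_s7 {p : ℝ → ℝ} {p' x : ℝ} (hp : HasDerivAt p p' x⁻¹) (hx : x ≠ 0) :
    HasDerivAt (fun t => t * p t⁻¹) (p x⁻¹ - x⁻¹ * p') x := by
  have hcomp : HasDerivAt (fun t => p t⁻¹) (p' * -(x ^ 2)⁻¹) x := hp.comp x (hasDerivAt_inv hx)
  refine ((hasDerivAt_id' x).fun_mul hcomp).congr_deriv ?_
  field_simp
  ring

theorem inv_lt_inv_of_zero_notMem_Icc {x₁ x₂ : ℝ} (h0 : (0 : ℝ) ∉ Icc x₁ x₂) (hx : x₁ < x₂) :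
    x₂⁻¹ < x₁⁻¹ := by
  rcases lt_or_gt_of_ne (fun h : x₁ = 0 => h0 ⟨h.le, h ▸ hx.le⟩) with hx₁ | hx₁
  · have hx₂ : x₂ < 0 := not_le.1 fun h => h0 ⟨hx₁.le, h⟩
    exact (inv_lt_inv_of_neg hx₂ hx₁).2 hx
  · exact (inv_lt_inv₀ (hx₁.trans hx) hx₁).2 hx

theorem inv_mem_Icc_of_mem_Icc_inv {x₁ x₂ u : ℝ} (h0 : (0 : ℝ) ∉ Icc x₁ x₂) (hx : x₁ ≤ x₂)
    (hu : u ∈ Icc x₂⁻¹ x₁⁻¹) : u⁻¹ ∈ Icc x₁ x₂ := by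
  rcases lt_or_gt_of_ne (fun h : x₁ = 0 => h0 ⟨h.le, h ▸ hx⟩) with hx₁ | hx₁
  · have hx₂ : x₂ < 0 := not_le.1 fun h => h0 ⟨hx₁.le, h⟩
    have hu0 : u < 0 := hu.2.trans_lt (inv_lt_zero.2 hx₁)
    exact ⟨(le_inv_of_neg hx₁ hu0).2 hu.2, (inv_le_of_neg hu0 hx₂).2 hu.1⟩
  · have hx₂ : 0 < x₂ := hx₁.trans_le hx
    have hu0 : 0 < u := (inv_pos.2 hx₂).trans_le hu.1
    exact ⟨(le_inv_comm₀ hx₁ hu0).2 hu.2, (inv_le_comm₀ hu0 hx₂).2 hu.1⟩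

theorem exists_pompeiu_mixed_deriv_eq_rect_slope (φ φx φy φxy : ℝ → ℝ → ℝ) {x₁ x₂ y₁ y₂ : ℝ}
    (hx : x₁ < x₂) (hy : y₁ < y₂) (hx0 : (0 : ℝ) ∉ Icc x₁ x₂) (hy0 : (0 : ℝ) ∉ Icc y₁ y₂)
    (hφx : ∀ x ∈ Icc x₁ x₂, ∀ y ∈ Icc y₁ y₂, HasDerivAt (fun t => φ t y) (φx x y) x)
    (hφy : ∀ x ∈ Icc x₁ x₂, ∀ y ∈ Icc y₁ y₂, HasDerivAt (fun s => φ x s) (φy x y) y)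
    (hφxy : ∀ x ∈ Icc x₁ x₂, ∀ y ∈ Icc y₁ y₂, HasDerivAt (fun s => φx x s) (φxy x y) y) :
    ∃ ξ₁ ∈ Icc x₁ x₂, ∃ ξ₂ ∈ Icc y₁ y₂,
      ξ₁ * ξ₂ * φxy ξ₁ ξ₂ - ξ₁ * φx ξ₁ ξ₂ - ξ₂ * φy ξ₁ ξ₂ + φ ξ₁ ξ₂ =
        (x₂ * y₂ * φ x₁ y₁ - x₂ * y₁ * φ x₁ y₂ - x₁ * y₂ * φ x₂ y₁ + x₁ * y₁ * φ x₂ y₂) /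
          ((x₂ - x₁) * (y₂ - y₁)) := by
  have hx_inv : ∀ u ∈ Icc x₂⁻¹ x₁⁻¹, u⁻¹ ∈ Icc x₁ x₂ := fun u =>
    inv_mem_Icc_of_mem_Icc_inv hx0 hx.le
  have hy_inv : ∀ v ∈ Icc y₂⁻¹ y₁⁻¹, v⁻¹ ∈ Icc y₁ y₂ := fun v =>
    inv_mem_Icc_of_mem_Icc_inv hy0 hy.le
  obtain ⟨u, hu, v, hv, hmvt⟩ := exists_mixed_deriv_eq_rect_slope
    (fun u v => v * (u * φ u⁻¹ v⁻¹))
    (fun u v => v * (φ u⁻¹ v⁻¹ - u⁻¹ * φx u⁻¹ v⁻¹))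
    (fun u v => φ u⁻¹ v⁻¹ - u⁻¹ * φx u⁻¹ v⁻¹ - v⁻¹ * (φy u⁻¹ v⁻¹ - u⁻¹ * φxy u⁻¹ v⁻¹))
    (inv_lt_inv_of_zero_notMem_Icc hx0 hx) (inv_lt_inv_of_zero_notMem_Icc hy0 hy)
    (fun u hu v hv => by
      have hu0 : u ≠ 0 := mt inv_eq_zero.2 (ne_of_mem_of_not_mem (hx_inv u hu) hx0)
      simpa only [inv_inv] using
        ((hφx _ (hx_inv u hu) _ (hy_inv v hv)).mul_comp_inv_s7 hu0).const_mul v)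
    (fun u hu v hv => by
      have hv0 : v ≠ 0 := mt inv_eq_zero.2 (ne_of_mem_of_not_mem (hy_inv v hv) hy0)
      simpa only [inv_inv] using
        ((hφy _ (hx_inv u hu) _ (hy_inv v hv)).fun_sub
          ((hφxy _ (hx_inv u hu) _ (hy_inv v hv)).const_mul u⁻¹)).mul_comp_inv_s7 hv0)
  refine ⟨u⁻¹, hx_inv u hu, v⁻¹, hy_inv v hv, ?_⟩
  have hx₁ : x₁ ≠ 0 := ne_of_mem_of_not_mem (left_mem_Icc.2 hx.le) hx0
  have hx₂ : x₂ ≠ 0 := ne_of_mem_of_not_mem (right_mem_Icc.2 hx.le) hx0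
  have hy₁ : y₁ ≠ 0 := ne_of_mem_of_not_mem (left_mem_Icc.2 hy.le) hy0
  have hy₂ : y₂ ≠ 0 := ne_of_mem_of_not_mem (right_mem_Icc.2 hy.le) hy0
  simp only [inv_inv] at hmvt
  calc _ = φ u⁻¹ v⁻¹ - u⁻¹ * φx u⁻¹ v⁻¹ - v⁻¹ * (φy u⁻¹ v⁻¹ - u⁻¹ * φxy u⁻¹ v⁻¹) := by ring
    _ = _ := by rw [hmvt]; field_simp

theorem boggio_mean_value_theorem_two_dim_general (a b c d : ℝ)
    (h0ab : (0 : ℝ) ∉ Set.Icc a b) (h0cd : (0 : ℝ) ∉ Set.Icc c d)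
    (f fx fy fxy g gx gy gxy : ℝ → ℝ → ℝ)
    (hfx : ∀ x ∈ Set.Ioo a b, ∀ y ∈ Set.Icc c d,
      HasDerivAt (fun t => f t y) (fx x y) x)
    (hgx : ∀ x ∈ Set.Ioo a b, ∀ y ∈ Set.Icc c d,
      HasDerivAt (fun t => g t y) (gx x y) x)
    (hfxy : ∀ x ∈ Set.Ioo a b, ∀ y ∈ Set.Ioo c d,
      HasDerivAt (fun s => fx x s) (fxy x y) y)
    (hgxy : ∀ x ∈ Set.Ioo a b, ∀ y ∈ Set.Ioo c d,
      HasDerivAt (fun s => gx x s) (gxy x y) y)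
    (hfy : ∀ x ∈ Set.Ioo a b, ∀ y ∈ Set.Ioo c d,
      HasDerivAt (fun s => f x s) (fy x y) y)
    (hgy : ∀ x ∈ Set.Ioo a b, ∀ y ∈ Set.Ioo c d,
      HasDerivAt (fun s => g x s) (gy x y) y)
    (x₁ x₂ : ℝ) (hx₁ : x₁ ∈ Set.Ioo a b) (hx₂ : x₂ ∈ Set.Ioo a b) (hx : x₁ < x₂)
    (y₁ y₂ : ℝ) (hy₁ : y₁ ∈ Set.Ioo c d) (hy₂ : y₂ ∈ Set.Ioo c d) (hy : y₁ < y₂) :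
    ∃ ξ₁ ∈ Set.Icc x₁ x₂, ∃ ξ₂ ∈ Set.Icc y₁ y₂,
      (ξ₁ * ξ₂ * gxy ξ₁ ξ₂ - ξ₁ * gx ξ₁ ξ₂ - ξ₂ * gy ξ₁ ξ₂ + g ξ₁ ξ₂) /
          (g x₂ y₂ - g x₂ y₁ - g x₁ y₂ + g x₁ y₁) -
        (ξ₁ * ξ₂ * fxy ξ₁ ξ₂ - ξ₁ * fx ξ₁ ξ₂ - ξ₂ * fy ξ₁ ξ₂ + f ξ₁ ξ₂) /
          (f x₂ y₂ - f x₂ y₁ - f x₁ y₂ + f x₁ y₁) =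
      (x₂ * y₂ * g x₁ y₁ - x₁ * y₂ * g x₂ y₁ - x₂ * y₁ * g x₁ y₂ +
          x₁ * y₁ * g x₂ y₂) /
        ((x₂ - x₁) * (y₂ - y₁) * (g x₂ y₂ - g x₂ y₁ - g x₁ y₂ + g x₁ y₁)) -
      (x₂ * y₂ * f x₁ y₁ - x₂ * y₁ * f x₁ y₂ - x₁ * y₂ * f x₂ y₁ +
          x₁ * y₁ * f x₂ y₂) /
        ((x₂ - x₁) * (y₂ - y₁) * (f x₂ y₂ - f x₂ y₁ - f x₁ y₂ + f x₁ y₁)) := by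
  set Δf := f x₂ y₂ - f x₂ y₁ - f x₁ y₂ + f x₁ y₁
  set Δg := g x₂ y₂ - g x₂ y₁ - g x₁ y₂ + g x₁ y₁
  have hIx : Icc x₁ x₂ ⊆ Ioo a b := Icc_subset_Ioo hx₁.1 hx₂.2
  have hIy : Icc y₁ y₂ ⊆ Ioo c d := Icc_subset_Ioo hy₁.1 hy₂.2
  obtain ⟨ξ₁, hξ₁, ξ₂, hξ₂, hpompeiu⟩ := exists_pompeiu_mixed_deriv_eq_rect_slope
    (fun x y => g x y / Δg - f x y / Δf) (fun x y => gx x y / Δg - fx x y / Δf)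
    (fun x y => gy x y / Δg - fy x y / Δf) (fun x y => gxy x y / Δg - fxy x y / Δf) hx hy
    (fun h0 => h0ab (Icc_subset_Icc hx₁.1.le hx₂.2.le h0))
    (fun h0 => h0cd (Icc_subset_Icc hy₁.1.le hy₂.2.le h0))
    (fun x hx y hy => ((hgx x (hIx hx) y (Ioo_subset_Icc_self (hIy hy))).div_const Δg).sub
      ((hfx x (hIx hx) y (Ioo_subset_Icc_self (hIy hy))).div_const Δf))
    (fun x hx y hy => ((hgy x (hIx hx) y (hIy hy)).div_const Δg).sub
      ((hfy x (hIx hx) y (hIy hy)).div_const Δf))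
    (fun x hx y hy => ((hgxy x (hIx hx) y (hIy hy)).div_const Δg).sub
      ((hfxy x (hIx hx) y (hIy hy)).div_const Δf))
  refine ⟨ξ₁, hξ₁, ξ₂, hξ₂, ?_⟩
  simp only [← div_div] at hpompeiu ⊢
  linear_combination hpompeiu

/-- Boggio's Mean Value Theorem for functions of two variables.
Here `fx, fy, fxy` (resp. `gx, gy, gxy`) are the first-order partial derivatives
and the mixed second-order partial derivative `∂²/∂y∂x` of `f` (resp. `g`); the
hypotheses `hfsymm`, `hgsymm` express the symmetry of mixed partials. -/
theorem boggio_mean_value_theorem_two_dim (a b c d : ℝ) (hab : a < b) (hcd : c < d)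
    (h0ab : (0 : ℝ) ∉ Set.Icc a b) (h0cd : (0 : ℝ) ∉ Set.Icc c d)
    (f fx fy fxy g gx gy gxy : ℝ → ℝ → ℝ)
    (hfcont : ∀ y₀ ∈ Set.Icc c d, ContinuousOn (fun x => f x y₀) (Set.Icc a b))
    (hgcont : ∀ y₀ ∈ Set.Icc c d, ContinuousOn (fun x => g x y₀) (Set.Icc a b))
    (hfx : ∀ x ∈ Set.Ioo a b, ∀ y ∈ Set.Icc c d,
      HasDerivAt (fun t => f t y) (fx x y) x)
    (hgx : ∀ x ∈ Set.Ioo a b, ∀ y ∈ Set.Icc c d,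
      HasDerivAt (fun t => g t y) (gx x y) x)
    (hfxcont : ∀ x₀ ∈ Set.Ioo a b, ContinuousOn (fun y => fx x₀ y) (Set.Icc c d))
    (hgxcont : ∀ x₀ ∈ Set.Ioo a b, ContinuousOn (fun y => gx x₀ y) (Set.Icc c d))
    (hfxy : ∀ x ∈ Set.Ioo a b, ∀ y ∈ Set.Ioo c d,
      HasDerivAt (fun s => fx x s) (fxy x y) y)
    (hgxy : ∀ x ∈ Set.Ioo a b, ∀ y ∈ Set.Ioo c d,
      HasDerivAt (fun s => gx x s) (gxy x y) y)
    (hfy : ∀ x ∈ Set.Ioo a b, ∀ y ∈ Set.Ioo c d,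
      HasDerivAt (fun s => f x s) (fy x y) y)
    (hgy : ∀ x ∈ Set.Ioo a b, ∀ y ∈ Set.Ioo c d,
      HasDerivAt (fun s => g x s) (gy x y) y)
    (hfsymm : ∀ x ∈ Set.Ioo a b, ∀ y ∈ Set.Ioo c d,
      HasDerivAt (fun t => fy t y) (fxy x y) x)
    (hgsymm : ∀ x ∈ Set.Ioo a b, ∀ y ∈ Set.Ioo c d,
      HasDerivAt (fun t => gy t y) (gxy x y) x)
    (x₁ x₂ : ℝ) (hx₁ : x₁ ∈ Set.Ioo a b) (hx₂ : x₂ ∈ Set.Ioo a b) (hx : x₁ < x₂)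
    (y₁ y₂ : ℝ) (hy₁ : y₁ ∈ Set.Ioo c d) (hy₂ : y₂ ∈ Set.Ioo c d) (hy : y₁ < y₂)
    (hΔf : f x₂ y₂ - f x₂ y₁ - f x₁ y₂ + f x₁ y₁ ≠ 0)
    (hΔg : g x₂ y₂ - g x₂ y₁ - g x₁ y₂ + g x₁ y₁ ≠ 0) :
    ∃ ξ₁ ∈ Set.Icc x₁ x₂, ∃ ξ₂ ∈ Set.Icc y₁ y₂,
      (ξ₁ * ξ₂ * gxy ξ₁ ξ₂ - ξ₁ * gx ξ₁ ξ₂ - ξ₂ * gy ξ₁ ξ₂ + g ξ₁ ξ₂) /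
          (g x₂ y₂ - g x₂ y₁ - g x₁ y₂ + g x₁ y₁) -
        (ξ₁ * ξ₂ * fxy ξ₁ ξ₂ - ξ₁ * fx ξ₁ ξ₂ - ξ₂ * fy ξ₁ ξ₂ + f ξ₁ ξ₂) /
          (f x₂ y₂ - f x₂ y₁ - f x₁ y₂ + f x₁ y₁) =
      (x₂ * y₂ * g x₁ y₁ - x₁ * y₂ * g x₂ y₁ - x₂ * y₁ * g x₁ y₂ +
          x₁ * y₁ * g x₂ y₂) /
        ((x₂ - x₁) * (y₂ - y₁) * (g x₂ y₂ - g x₂ y₁ - g x₁ y₂ + g x₁ y₁)) -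
      (x₂ * y₂ * f x₁ y₁ - x₂ * y₁ * f x₁ y₂ - x₁ * y₂ * f x₂ y₁ +
          x₁ * y₁ * f x₂ y₂) /
        ((x₂ - x₁) * (y₂ - y₁) * (f x₂ y₂ - f x₂ y₁ - f x₁ y₂ + f x₁ y₁)) :=
  boggio_mean_value_theorem_two_dim_general a b c d h0ab h0cd f fx fy fxy g gx gy gxy hfx hgx hfxy
    hgxy hfy hgy x₁ x₂ hx₁ hx₂ hx y₁ y₂ hy₁ hy₂ hy
end
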